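/- arXiv:2210.04667 — 2 statements merged into one kernel-verified Lean document; each statement's English description precedes it below -/
import Mathlib

section
/- Let λ* > 0, let λ̄ : ℝ₊ → [0, λ*] be integrable with R₀ := ∫₀^∞ λ̄(t) dt ∈ (0, ∞), let λ̄₀ : ℝ₊ → ℝ₊ be integrable, let c ∈ [0,1], and let x : ℝ₊ → [0,1] and y : ℝ₊ → [0, λ*] be measurable functions satisfying y(t) = c·λ̄₀(t) + ∫₀ᵗ λ̄(t−s)·x(s) y(s) ds for all t ≥ 0. If ∫₀^∞ y(t) dt = ∞, then (∫₀ᵗ x(s) y(s) ds)/(∫₀ᵗ y(s) ds) → 1/R₀ as t → ∞. -/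
open MeasureTheory Filter Set ProbabilityTheory
open scoped ENNReal

noncomputable section

/-- A real function is càdlàg on `[0, ∞)`: right-continuous on `[0,∞)` with left limits. -/
def Cadlag (f : ℝ → ℝ) : Prop :=
  (∀ t : ℝ, 0 ≤ t → ContinuousWithinAt f (Set.Ici t) t) ∧
  (∀ t : ℝ, 0 < t → ∃ l : ℝ, Filter.Tendsto f (nhdsWithin t (Set.Iio t)) (nhds l))

variable {Ω : Type*} [MeasurableSpace Ω]

/-- `η(ω) = sup {t ≥ 0 : λ(ω,t) > 0}`, with the convention `sup ∅ = 0`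
(which is the junk value of `sSup` on `ℝ`). -/
def etaSup (lam : Ω → ℝ → ℝ) (ω : Ω) : ℝ :=
  sSup {t : ℝ | 0 ≤ t ∧ 0 < lam ω t}

/-- `γ* (ω) = lim_{t → ∞} γ(ω,t) = sup_{t ≥ 0} γ(ω,t)` for a.s. non-decreasing bounded `γ`. -/
def gamStar (gam : Ω → ℝ → ℝ) (ω : Ω) : ℝ :=
  sSup (gam ω '' Set.Ici (0:ℝ))

/-- `λ̄(t) = 𝔼[λ(t)]`. -/
def lamBar (P : Measure Ω) (lam : Ω → ℝ → ℝ) (t : ℝ) : ℝ :=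
  ∫ ω, lam ω t ∂P

/-- `Ī(0) = ℙ(η₀ > 0)`. -/
def IbarZero (P : Measure Ω) (lam0 : Ω → ℝ → ℝ) : ℝ :=
  (P {ω | 0 < etaSup lam0 ω}).toReal

/-- `λ̄₀(t) = 𝔼[λ₀(t) | η₀ > 0]`. -/
def lamBarZero (P : Measure Ω) (lam0 : Ω → ℝ → ℝ) (t : ℝ) : ℝ :=
  (∫ ω in {ω | 0 < etaSup lam0 ω}, lam0 ω t ∂P) / IbarZero P lam0

/-- `F₀ᶜ(t) = ℙ(η₀ > t | η₀ > 0)`. -/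
def FZeroc (P : Measure Ω) (lam0 : Ω → ℝ → ℝ) (t : ℝ) : ℝ :=
  (P {ω | t < etaSup lam0 ω}).toReal / IbarZero P lam0

/-- `Fᶜ(t) = ℙ(η > t)`. -/
def survFc (P : Measure Ω) (lam : Ω → ℝ → ℝ) (t : ℝ) : ℝ :=
  (P {ω | t < etaSup lam ω}).toReal

/-- `R₀ = ∫₀^∞ λ̄(t) dt`. -/
def Rnought (P : Measure Ω) (lam : Ω → ℝ → ℝ) : ℝ :=
  ∫ t in Set.Ioi (0:ℝ), lamBar P lam t

/-- `𝔼[1/γ*] ∈ (0,∞]`, with the convention `1/0 = ∞`. -/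
def EinvGamStar (P : Measure Ω) (gam : Ω → ℝ → ℝ) : ℝ≥0∞ :=
  ∫⁻ ω, (ENNReal.ofReal (gamStar gam ω))⁻¹ ∂P

/-- The pair of integral equations defining the limit epidemic system. -/
def SolvesLimitSystem (P : Measure Ω) (lam0 gam0 lam gam : Ω → ℝ → ℝ)
    (S F : ℝ → ℝ) : Prop :=
  (∀ t : ℝ, 0 ≤ t →
    S t = (∫ ω, gam0 ω t * Real.exp (- ∫ r in (0:ℝ)..t, gam0 ω r * F r) ∂P)
      + ∫ s in (0:ℝ)..t,
          (∫ ω, gam ω (t - s) * Real.exp (- ∫ r in s..t, gam ω (r - s) * F r) ∂P)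
            * (S s * F s)) ∧
  (∀ t : ℝ, 0 ≤ t →
    F t = IbarZero P lam0 * lamBarZero P lam0 t
      + ∫ s in (0:ℝ)..t, lamBar P lam (t - s) * (S s * F s))

/-- A solution of the limit epidemic system with càdlàg nonnegative components. -/
def IsLimitSolution (P : Measure Ω) (lam0 gam0 lam gam : Ω → ℝ → ℝ)
    (S F : ℝ → ℝ) : Prop :=
  Cadlag S ∧ Cadlag F ∧ (∀ t : ℝ, 0 ≤ t → 0 ≤ S t ∧ 0 ≤ F t) ∧
  SolvesLimitSystem P lam0 gam0 lam gam S F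

/-- The standing assumptions on the random infectivity/susceptibility functions:
measurability, càdlàg paths, the bounds `0 ≤ λ₀, λ ≤ λ*`, `0 ≤ γ₀, γ ≤ 1`, and the a.s.
support condition `sup{t : λ(t) > 0} ≤ inf{t : γ(t) > 0}` (for both pairs). -/
def BaseContext (P : Measure Ω) (lamStar : ℝ) (lam0 gam0 lam gam : Ω → ℝ → ℝ) : Prop :=
  0 < lamStar ∧
  Measurable (Function.uncurry lam0) ∧ Measurable (Function.uncurry gam0) ∧
  Measurable (Function.uncurry lam) ∧ Measurable (Function.uncurry gam) ∧
  (∀ᵐ ω ∂P, Cadlag (lam0 ω) ∧ Cadlag (gam0 ω) ∧ Cadlag (lam ω) ∧ Cadlag (gam ω)) ∧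
  (∀ᵐ ω ∂P, ∀ t : ℝ, 0 ≤ t →
    lam0 ω t ∈ Set.Icc 0 lamStar ∧ lam ω t ∈ Set.Icc 0 lamStar ∧
    gam0 ω t ∈ Set.Icc (0:ℝ) 1 ∧ gam ω t ∈ Set.Icc (0:ℝ) 1) ∧
  (∀ᵐ ω ∂P, ∀ s t : ℝ, 0 ≤ s → 0 ≤ t → 0 < lam ω s → 0 < gam ω t → s ≤ t) ∧
  (∀ᵐ ω ∂P, ∀ s t : ℝ, 0 ≤ s → 0 ≤ t → 0 < lam0 ω s → 0 < gam0 ω t → s ≤ t)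

/-- Assumption (I): `γ` and `γ₀` have a.s. non-decreasing paths, and `(λ₀, γ₀)` is built from
an independent pair `(λ̃, γ̃) ~ (λ, γ)`, an age `ξ ∈ [0, η̃]` and a Bernoulli variable `χ`
with `ℙ(χ = 1) = Ī(0)`, via `λ₀(t) = χ λ̃(t+ξ)` and `γ₀(t) = (1-χ) + χ γ̃(t+ξ)`. -/
def AssumptionI (P : Measure Ω) (lam0 gam0 lam gam : Ω → ℝ → ℝ) : Prop :=
  (∀ᵐ ω ∂P, MonotoneOn (gam ω) (Set.Ici 0) ∧ MonotoneOn (gam0 ω) (Set.Ici 0)) ∧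
  ∃ (lamT gamT : Ω → ℝ → ℝ) (xi chi : Ω → ℝ),
    Measurable (fun ω => (lamT ω, gamT ω)) ∧ Measurable xi ∧ Measurable chi ∧
    Measure.map (fun ω => (lamT ω, gamT ω)) P = Measure.map (fun ω => (lam ω, gam ω)) P ∧
    (∀ᵐ ω ∂P, 0 ≤ xi ω ∧ xi ω ≤ etaSup lamT ω) ∧
    (∀ ω, chi ω = 0 ∨ chi ω = 1) ∧
    P {ω | chi ω = 1} = P {ω | 0 < etaSup lam0 ω} ∧
    IndepFun chi (fun ω => (lamT ω, gamT ω, xi ω)) P ∧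
    (∀ᵐ ω ∂P, ∀ t : ℝ, 0 ≤ t →
      lam0 ω t = chi ω * lamT ω (t + xi ω) ∧
      gam0 ω t = (1 - chi ω) + chi ω * gamT ω (t + xi ω))

/-- Assumption (II): there is a nonnegative integrable random time `t*` such that a.s.
`γ(t) ≥ γ*/2` for all `t ≥ t*`. -/
def AssumptionII (P : Measure Ω) (gam : Ω → ℝ → ℝ) : Prop :=
  ∃ tstar : Ω → ℝ, Measurable tstar ∧ (∀ᵐ ω ∂P, 0 ≤ tstar ω) ∧ Integrable tstar P ∧
    ∀ᵐ ω ∂P, ∀ t : ℝ, tstar ω ≤ t → gamStar gam ω / 2 ≤ gam ω t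

/-- Assumption (III): `γ*` is deterministic, and for any `δ ∈ (0,1)` there is a deterministic
`t_δ > 0` with `min(γ₀(t_δ), γ(t_δ)) ≥ (1-δ) γ*` a.s. -/
def AssumptionIII (P : Measure Ω) (gam0 gam : Ω → ℝ → ℝ) : Prop :=
  (∃ c : ℝ, ∀ᵐ ω ∂P, gamStar gam ω = c) ∧
  (∀ δ : ℝ, δ ∈ Set.Ioo (0:ℝ) 1 → ∃ tδ : ℝ, 0 < tδ ∧
    ∀ᵐ ω ∂P, (1 - δ) * gamStar gam ω ≤ min (gam0 ω tδ) (gam ω tδ))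

/-- Assumption (IV): there is a positive decreasing `h` with `h(0) = 1` and
`λ̄(s+t) ≥ h(s) λ̄(t)`, `λ̄₀(s+t) ≥ h(s) λ̄₀(t)`; moreover `λ̄₀` is continuous. -/
def AssumptionIV (lamBarF lamBarZeroF : ℝ → ℝ) : Prop :=
  (∃ h : ℝ → ℝ, (∀ s : ℝ, 0 ≤ s → 0 < h s) ∧ AntitoneOn h (Set.Ici 0) ∧ h 0 = 1 ∧
    ∀ s t : ℝ, 0 ≤ s → 0 ≤ t →
      h s * lamBarF t ≤ lamBarF (s + t) ∧ h s * lamBarZeroF t ≤ lamBarZeroF (s + t)) ∧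
  ContinuousOn lamBarZeroF (Set.Ici 0)

/-- `H(x) = ∫₀^∞ 𝔼[exp(−∫₀ˢ γ(r/x) dr)] ds`. -/
def Hfun (P : Measure Ω) (gam : Ω → ℝ → ℝ) (x : ℝ) : ℝ :=
  ∫ s in Set.Ioi (0:ℝ), ∫ ω, Real.exp (- ∫ r in (0:ℝ)..s, gam ω (r / x)) ∂P

/-- `Ī(t) = Ī(0) F₀ᶜ(t) + ∫₀ᵗ Fᶜ(t-s) S̄(s) F̄(s) ds`. -/
def IbarFun (P : Measure Ω) (lam0 lam : Ω → ℝ → ℝ) (S F : ℝ → ℝ) (t : ℝ) : ℝ :=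
  IbarZero P lam0 * FZeroc P lam0 t
    + ∫ s in (0:ℝ)..t, survFc P lam (t - s) * (S s * F s)

/-- The SIRS integral system of the Kermack–McKendrick model (deterministic data). -/
def SolvesSIRSIntegral (lamT gamT muF Fcs I0 R0f : ℝ → ℝ) (S0 : ℝ)
    (S F : ℝ → ℝ) : Prop :=
  ∀ t : ℝ, 0 ≤ t →
    (S t = S0 * Real.exp (- ∫ r in (0:ℝ)..t, F r)
      + (∫ τ in (0:ℝ)..t, ∫ r in Set.Ioi (0:ℝ),
          gamT (t - τ) * muF (τ + r) * I0 r * Real.exp (- ∫ s in r..(τ + r), muF s)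
            * Real.exp (- ∫ s in τ..t, gamT (s - τ) * F s))
      + (∫ τ in Set.Ioi (0:ℝ),
          gamT (t + τ) * R0f τ * Real.exp (- ∫ s in (0:ℝ)..t, gamT (s + τ) * F s))
      + (∫ r in (0:ℝ)..t,
          (∫ τ in (0:ℝ)..(t - r),
            gamT (t - r - τ) * muF τ * Fcs τ
              * Real.exp (- ∫ s in (τ + r)..t, gamT (s - r - τ) * F s)) * (S r * F r))) ∧
    (F t = (∫ τ in Set.Ioi (0:ℝ), lamT (t + τ) * I0 τ * Real.exp (- ∫ s in τ..(t + τ), muF s))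
      + ∫ τ in (0:ℝ)..t, lamT (t - τ) * (S τ * F τ)
          * Real.exp (- ∫ s in (0:ℝ)..(t - τ), muF s))

/-- `Ī(t,τ)` built from a solution of the SIRS integral system. -/
def IbDef (I0 Fcs S F : ℝ → ℝ) (t τ : ℝ) : ℝ :=
  if t < τ then I0 (τ - t) * Fcs τ / Fcs (τ - t) else F (t - τ) * S (t - τ) * Fcs τ

/-- `R̄(t,0)` built from a solution of the SIRS integral system. -/
def RzeroDef (I0 fd Fcs S F : ℝ → ℝ) (t : ℝ) : ℝ :=
  (∫ τ in Set.Ioi (0:ℝ), I0 τ * fd (t + τ) / Fcs τ)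
    + ∫ τ in (0:ℝ)..t, fd (t - τ) * (S τ * F τ)

/-- `R̄(t,θ)` built from a solution of the SIRS integral system. -/
def RbDef (I0 R0f fd gamT Fcs S F : ℝ → ℝ) (t θ : ℝ) : ℝ :=
  if θ < t then
    RzeroDef I0 fd Fcs S F (t - θ) * Real.exp (- ∫ s in (0:ℝ)..θ, gamT s * F (t + s - θ))
  else R0f (θ - t) * Real.exp (- ∫ s in (θ - t)..θ, gamT s * F (t - θ + s))

/-- `S̄(t)` built from a solution of the SIRS integral system. -/
def SbDef (S0 : ℝ) (F : ℝ → ℝ) (t : ℝ) : ℝ :=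
  S0 * Real.exp (- ∫ r in (0:ℝ)..t, F r)

/-!
Integrating the renewal equation over `[0, T]` and exchanging the order of integration gives
`Y(T) = c A(T) + ∫₀ᵀ x(s) y(s) L(T - s) ds`, where `Y = ∫₀ᵀ y`, `A = ∫₀ᵀ λ̄₀` and
`L(v) = ∫₀ᵛ λ̄` increases to `R₀`. Hence `Y ≤ c A + R₀ Z` with `Z = ∫₀ᵀ x y`, while splitting the
integral at `s = T - M` gives `R₀ Z - Y ≤ (R₀ - L(M)) Z + λ* R₀ M`. As `A` stays bounded,
`Z ≤ Y` and `Y → ∞`, dividing by `Y` gives `limsup |R₀ Z / Y - 1| ≤ R₀ - L(M)`, which tends to `0`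
as `M → ∞`.
-/

open Function Topology

noncomputable def causalConvKernel (f g : ℝ → ℝ) (t s : ℝ) : ℝ :=
  if s ≤ t then f (t - s) * g s else 0

section CausalConvolution

variable {f g : ℝ → ℝ} {T : ℝ}

theorem integrable_causalConvKernel (hf : Measurable f) (hg : Measurable g) {Cf Cg : ℝ}
    (hfC : ∀ t, 0 ≤ t → |f t| ≤ Cf) (hgC : ∀ s, 0 ≤ s → |g s| ≤ Cg) :
    Integrable (uncurry (causalConvKernel f g))
      ((volume.restrict (Ioc 0 T)).prod (volume.restrict (Ioc 0 T))) := by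
  have hmeas : Measurable (uncurry (causalConvKernel f g)) :=
    Measurable.ite (measurableSet_le measurable_snd measurable_fst)
      ((hf.comp (measurable_fst.sub measurable_snd)).mul (hg.comp measurable_snd))
      measurable_const
  rw [Measure.prod_restrict]
  refine IntegrableOn.of_bound (by
    rw [Measure.prod_prod]; exact ENNReal.mul_lt_top measure_Ioc_lt_top measure_Ioc_lt_top)
    hmeas.aestronglyMeasurable (Cf * Cg) ?_
  filter_upwards [ae_restrict_mem (measurableSet_Ioc.prod measurableSet_Ioc)]
    with ⟨t, s⟩ ⟨_, hs⟩
  have hCf : 0 ≤ Cf := (abs_nonneg _).trans (hfC 0 le_rfl)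
  have hCg : 0 ≤ Cg := (abs_nonneg _).trans (hgC 0 le_rfl)
  simp only [uncurry_apply_pair, causalConvKernel, Real.norm_eq_abs]
  split_ifs with hst
  · rw [abs_mul]
    exact mul_le_mul (hfC _ (sub_nonneg.2 hst)) (hgC _ hs.1.le) (abs_nonneg _) hCf
  · simpa using mul_nonneg hCf hCg

theorem setIntegral_causalConvKernel_left {t : ℝ} (ht : t ∈ Ioc 0 T) :
    ∫ s in Ioc 0 T, causalConvKernel f g t s = ∫ s in (0:ℝ)..t, f (t - s) * g s := by
  have hcongr : EqOn (causalConvKernel f g t)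
      ((Ioc 0 t).indicator fun s => f (t - s) * g s) (Ioc 0 T) := by
    intro s hs
    by_cases hst : s ≤ t
    · simp [causalConvKernel, hst, hs.1]
    · simp [causalConvKernel, hst]
  rw [setIntegral_congr_fun measurableSet_Ioc hcongr, setIntegral_indicator measurableSet_Ioc,
    Ioc_inter_Ioc, intervalIntegral.integral_of_le ht.1.le, max_self, min_eq_right ht.2]

theorem setIntegral_causalConvKernel_right {s : ℝ} (hs : s ∈ Ioc 0 T) :
    ∫ t in Ioc 0 T, causalConvKernel f g t s = g s * ∫ u in (0:ℝ)..(T - s), f u := by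
  have hcongr :
      (fun t => causalConvKernel f g t s) = (Ici s).indicator fun t => f (t - s) * g s := by
    ext t
    simp [causalConvKernel, indicator_apply]
  have hinter : Ioc 0 T ∩ Ici s = Icc s T := by
    ext t
    simp only [mem_inter_iff, mem_Ioc, mem_Ici, mem_Icc]
    exact ⟨fun h => ⟨h.2, h.1.2⟩, fun h => ⟨⟨hs.1.trans_le h.1, h.2⟩, h.1⟩⟩
  rw [hcongr, setIntegral_indicator measurableSet_Ici, hinter, integral_Icc_eq_integral_Ioc,
    ← intervalIntegral.integral_of_le hs.2, intervalIntegral.integral_mul_const,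
    intervalIntegral.integral_comp_sub_right, sub_self, mul_comm]

theorem integrableOn_mul_primitive_sub (hf : Measurable f) (hg : Measurable g) {Cf Cg : ℝ}
    (hfC : ∀ t, 0 ≤ t → |f t| ≤ Cf) (hgC : ∀ s, 0 ≤ s → |g s| ≤ Cg) :
    IntegrableOn (fun s => g s * ∫ u in (0:ℝ)..(T - s), f u) (Ioc 0 T) :=
  (integrable_causalConvKernel hf hg hfC hgC).integral_prod_right.congr <|
    (ae_restrict_iff' measurableSet_Ioc).2 <| ae_of_all _ fun _ hs =>
      setIntegral_causalConvKernel_right hs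

theorem setIntegral_Ioc_causalConv_eq (hf : Measurable f) (hg : Measurable g) {Cf Cg : ℝ}
    (hfC : ∀ t, 0 ≤ t → |f t| ≤ Cf) (hgC : ∀ s, 0 ≤ s → |g s| ≤ Cg) :
    ∫ t in Ioc 0 T, (∫ s in (0:ℝ)..t, f (t - s) * g s)
      = ∫ s in Ioc 0 T, g s * ∫ u in (0:ℝ)..(T - s), f u := by
  rw [← setIntegral_congr_fun measurableSet_Ioc fun _ => setIntegral_causalConvKernel_left,
    ← setIntegral_congr_fun measurableSet_Ioc fun _ => setIntegral_causalConvKernel_right]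
  exact integral_integral_swap (integrable_causalConvKernel hf hg hfC hgC)

end CausalConvolution

theorem sub_setIntegral_mul_le {g k : ℝ → ℝ} {T M B K ε : ℝ} (hM : 0 ≤ M) (hB : 0 ≤ B)
    (hK : 0 ≤ K) (hε : 0 ≤ ε)
    (hg_int : IntegrableOn g (Ioc 0 T)) (hgk_int : IntegrableOn (fun s => g s * k s) (Ioc 0 T))
    (hg : ∀ s ∈ Ioc 0 T, g s ∈ Icc 0 B) (hk : ∀ s ∈ Ioc 0 T, k s ∈ Icc 0 K)
    (hk_far : ∀ s ∈ Ioc 0 (T - M), K - ε ≤ k s) :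
    K * (∫ s in Ioc 0 T, g s) - ∫ s in Ioc 0 T, g s * k s
      ≤ ε * (∫ s in Ioc 0 T, g s) + B * K * M := by
  have hnear : IntegrableOn ((Ioc (T - M) T).indicator fun _ => B * K) (Ioc 0 T) :=
    (integrableOn_const measure_Ioc_lt_top.ne).indicator measurableSet_Ioc
  have hpt : ∀ s ∈ Ioc 0 T,
      K * g s - g s * k s ≤ ε * g s + (Ioc (T - M) T).indicator (fun _ => B * K) s := by
    intro s hs
    obtain ⟨hg0, hgB⟩ := hg s hs
    obtain ⟨hk0, hkK⟩ := hk s hs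
    by_cases hsM : s ≤ T - M
    · rw [indicator_of_notMem fun h => not_lt.2 hsM h.1]
      nlinarith [hk_far s ⟨hs.1, hsM⟩]
    · rw [indicator_of_mem (show s ∈ Ioc (T - M) T from ⟨not_le.1 hsM, hs.2⟩)]
      nlinarith [mul_le_mul hgB (sub_le_self K hk0) (by linarith) hB]
  have hvol : volume.real (Ioc 0 T ∩ Ioc (T - M) T) ≤ M := by
    refine (measureReal_mono inter_subset_right measure_Ioc_lt_top.ne).trans ?_
    simp [Real.volume_real_Ioc, hM]
  calc K * (∫ s in Ioc 0 T, g s) - ∫ s in Ioc 0 T, g s * k s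
      = ∫ s in Ioc 0 T, (K * g s - g s * k s) := by
        rw [integral_sub (hg_int.const_mul K) hgk_int, integral_const_mul]
    _ ≤ ∫ s in Ioc 0 T, (ε * g s + (Ioc (T - M) T).indicator (fun _ => B * K) s) :=
        setIntegral_mono_on ((hg_int.const_mul K).sub hgk_int)
          ((hg_int.const_mul ε).add hnear) measurableSet_Ioc hpt
    _ ≤ ε * (∫ s in Ioc 0 T, g s) + B * K * M := by
        rw [integral_add (hg_int.const_mul ε) hnear, integral_const_mul,
          setIntegral_indicator measurableSet_Ioc, setIntegral_const, smul_eq_mul]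
        nlinarith [mul_le_mul_of_nonneg_right hvol (mul_nonneg hB hK)]

theorem integrableOn_Ioc_of_mem_Icc {f : ℝ → ℝ} (hf : Measurable f) {B : ℝ}
    (hfB : ∀ t, 0 ≤ t → f t ∈ Icc 0 B) (T : ℝ) : IntegrableOn f (Ioc 0 T) :=
  IntegrableOn.of_bound measure_Ioc_lt_top hf.aestronglyMeasurable B <|
    (ae_restrict_iff' measurableSet_Ioc).2 <| ae_of_all _ fun t ht =>
      (abs_of_nonneg (hfB t ht.1.le).1).trans_le (hfB t ht.1.le).2

theorem intervalIntegral_mono_right_of_nonneg {f : ℝ → ℝ} (hf_nn : ∀ t, 0 < t → 0 ≤ f t)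
    (hf_int : IntegrableOn f (Ioi 0)) {a b : ℝ} (ha : 0 ≤ a) (hab : a ≤ b) :
    ∫ t in (0:ℝ)..a, f t ≤ ∫ t in (0:ℝ)..b, f t :=
  intervalIntegral.integral_mono_interval le_rfl ha hab
    ((ae_restrict_iff' measurableSet_Ioc).2 <| ae_of_all _ fun t ht => hf_nn t ht.1)
    ((intervalIntegrable_iff_integrableOn_Ioc_of_le (ha.trans hab)).2
      (hf_int.mono_set Ioc_subset_Ioi_self))

theorem intervalIntegral_le_integral_Ioi_of_nonneg {f : ℝ → ℝ} (hf_nn : ∀ t, 0 < t → 0 ≤ f t)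
    (hf_int : IntegrableOn f (Ioi 0)) {v : ℝ} (hv : 0 ≤ v) :
    ∫ t in (0:ℝ)..v, f t ≤ ∫ t in Ioi 0, f t := by
  rw [intervalIntegral.integral_of_le hv]
  exact setIntegral_mono_set hf_int
    ((ae_restrict_iff' measurableSet_Ioi).2 <| ae_of_all _ hf_nn) Ioc_subset_Ioi_self.eventuallyLE

theorem setIntegral_Ioc_eq_of_renewal {f h₀ g y : ℝ → ℝ} {C B T : ℝ} (hf : Measurable f)
    (hg : Measurable g) (hfC : ∀ t, 0 ≤ t → |f t| ≤ C) (hgB : ∀ s, 0 ≤ s → |g s| ≤ B)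
    (h₀_int : IntegrableOn h₀ (Ioc 0 T)) (hy_int : IntegrableOn y (Ioc 0 T))
    (hy : ∀ t, 0 ≤ t → y t = h₀ t + ∫ s in (0:ℝ)..t, f (t - s) * g s) :
    ∫ t in Ioc 0 T, y t
      = (∫ t in Ioc 0 T, h₀ t) + ∫ s in Ioc 0 T, g s * ∫ u in (0:ℝ)..(T - s), f u := by
  have hy' : EqOn y (fun t => h₀ t + ∫ s in (0:ℝ)..t, f (t - s) * g s) (Ioc 0 T) :=
    fun t ht => hy t ht.1.le
  have hconv_int : IntegrableOn (fun t => ∫ s in (0:ℝ)..t, f (t - s) * g s) (Ioc 0 T) :=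
    (hy_int.sub h₀_int).congr_fun (fun t ht => by simp [hy' ht]) measurableSet_Ioc
  rw [setIntegral_congr_fun measurableSet_Ioc hy', integral_add h₀_int hconv_int,
    setIntegral_Ioc_causalConv_eq hf hg hfC hgB]

theorem abs_sub_setIntegral_le_of_renewal {f h₀ g y : ℝ → ℝ} {C B M T : ℝ}
    (hf : Measurable f) (hg : Measurable g) (hf_range : ∀ t, 0 ≤ t → f t ∈ Icc 0 C)
    (hf_int : IntegrableOn f (Ioi 0)) (hg_range : ∀ t, 0 ≤ t → g t ∈ Icc 0 B)
    (h₀_nn : ∀ t, 0 ≤ t → 0 ≤ h₀ t) (h₀_int : IntegrableOn h₀ (Ioi 0))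
    (hy_int : IntegrableOn y (Ioc 0 T))
    (hy : ∀ t, 0 ≤ t → y t = h₀ t + ∫ s in (0:ℝ)..t, f (t - s) * g s) (hM : 0 ≤ M) :
    |(∫ t in Ioi 0, f t) * (∫ s in Ioc 0 T, g s) - ∫ t in Ioc 0 T, y t|
      ≤ ((∫ t in Ioi 0, f t) - ∫ t in (0:ℝ)..M, f t) * (∫ s in Ioc 0 T, g s)
        + (B * (∫ t in Ioi 0, f t) * M + ∫ t in Ioi 0, h₀ t) := by
  set R := ∫ t in Ioi 0, f t
  have hf_nn : ∀ t, 0 < t → 0 ≤ f t := fun t ht => (hf_range t ht.le).1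
  have hfC : ∀ t, 0 ≤ t → |f t| ≤ C := fun t ht =>
    (abs_of_nonneg (hf_range t ht).1).trans_le (hf_range t ht).2
  have hgB : ∀ t, 0 ≤ t → |g t| ≤ B := fun t ht =>
    (abs_of_nonneg (hg_range t ht).1).trans_le (hg_range t ht).2
  have hg_int := integrableOn_Ioc_of_mem_Icc hg hg_range T
  have hgL_int := integrableOn_mul_primitive_sub (T := T) hf hg hfC hgB
  have hL_range : ∀ s ∈ Ioc 0 T, (∫ u in (0:ℝ)..(T - s), f u) ∈ Icc 0 R := fun s hs =>
    ⟨intervalIntegral.integral_nonneg (sub_nonneg.2 hs.2) fun t ht => (hf_range t ht.1).1,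
      intervalIntegral_le_integral_Ioi_of_nonneg hf_nn hf_int (sub_nonneg.2 hs.2)⟩
  have hupper :
      ∫ s in Ioc 0 T, g s * ∫ u in (0:ℝ)..(T - s), f u ≤ R * ∫ s in Ioc 0 T, g s := by
    rw [← integral_const_mul]
    refine setIntegral_mono_on hgL_int (hg_int.const_mul R) measurableSet_Ioc fun s hs => ?_
    rw [mul_comm R]
    exact mul_le_mul_of_nonneg_left (hL_range s hs).2 (hg_range s hs.1.le).1
  have hlower := sub_setIntegral_mul_le hM ((hg_range 0 le_rfl).1.trans (hg_range 0 le_rfl).2)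
    (setIntegral_nonneg measurableSet_Ioi hf_nn)
    (sub_nonneg.2 (intervalIntegral_le_integral_Ioi_of_nonneg hf_nn hf_int hM))
    hg_int hgL_int (fun s hs => hg_range s hs.1.le) hL_range fun s hs => by
      rw [sub_sub_cancel]
      exact intervalIntegral_mono_right_of_nonneg hf_nn hf_int hM (le_sub_comm.1 hs.2)
  have hh₀ : 0 ≤ ∫ t in Ioc 0 T, h₀ t ∧ ∫ t in Ioc 0 T, h₀ t ≤ ∫ t in Ioi 0, h₀ t :=
    ⟨setIntegral_nonneg measurableSet_Ioc fun t ht => h₀_nn t ht.1.le,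
      setIntegral_mono_set h₀_int ((ae_restrict_iff' measurableSet_Ioi).2 <|
        ae_of_all _ fun t ht => h₀_nn t ht.le) Ioc_subset_Ioi_self.eventuallyLE⟩
  rw [setIntegral_Ioc_eq_of_renewal hf hg hfC hgB (h₀_int.mono_set Ioc_subset_Ioi_self) hy_int hy,
    abs_le]
  constructor <;> linarith

theorem tendsto_div_of_abs_sub_le {α : Type*} {l : Filter α} {Y Z : α → ℝ}
    (hY : Tendsto Y l atTop) (h : ∀ δ > 0, ∃ C, ∀ᶠ a in l, |Z a - Y a| ≤ δ * Y a + C) :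
    Tendsto (fun a => Z a / Y a) l (𝓝 1) := by
  rw [Metric.tendsto_nhds]
  intro ε hε
  obtain ⟨C, hC⟩ := h (ε / 2) (half_pos hε)
  filter_upwards [hC, hY.eventually_gt_atTop (2 * |C| / ε)] with a hZY hYC
  have hY0 : 0 < Y a := lt_of_le_of_lt (by positivity) hYC
  rw [div_lt_iff₀ hε] at hYC
  rw [Real.dist_eq, div_sub_one hY0.ne', abs_div, abs_of_pos hY0, div_lt_iff₀ hY0]
  linarith [le_abs_self C]

theorem tendsto_setIntegral_Ioc_atTop_of_lintegral_eq_top {f : ℝ → ℝ} (hf : Measurable f)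
    (hf_int : ∀ T, IntegrableOn f (Ioc 0 T)) (hf_nn : ∀ t, 0 < t → 0 ≤ f t)
    (hf_top : ∫⁻ t in Ioi 0, ENNReal.ofReal (f t) = ⊤) :
    Tendsto (fun T => ∫ t in Ioc 0 T, f t) atTop atTop := by
  rw [← ENNReal.tendsto_ofReal_nhds_top, ← hf_top]
  have hcover : AECover (volume.restrict (Ioi 0)) atTop (fun T : ℝ => Iic T) :=
    aecover_Iic tendsto_id
  refine (hcover.lintegral_tendsto_of_countably_generated
    hf.ennreal_ofReal.aemeasurable).congr fun T => ?_
  rw [Measure.restrict_restrict measurableSet_Iic, Iic_inter_Ioi,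
    ofReal_integral_eq_lintegral_ofReal (hf_int T)]
  filter_upwards [ae_restrict_mem measurableSet_Ioc] with t ht using hf_nn t ht.1

theorem ratio_tendsto_inv_R0_general
    (lamStar : ℝ)
    (lamBarF lamBar0F x y : ℝ → ℝ)
    (hlb_meas : Measurable lamBarF)
    (hx : Measurable x) (hy : Measurable y)
    (hlb_range : ∀ t : ℝ, 0 ≤ t → lamBarF t ∈ Set.Icc 0 lamStar)
    (hlb_int : IntegrableOn lamBarF (Set.Ioi 0))
    (hlb0_nn : ∀ t : ℝ, 0 ≤ t → 0 ≤ lamBar0F t)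
    (hlb0_int : IntegrableOn lamBar0F (Set.Ioi 0))
    (R0 : ℝ) (hR0def : R0 = ∫ t in Set.Ioi (0:ℝ), lamBarF t) (hR0pos : 0 < R0)
    (c : ℝ) (hc : c ∈ Set.Icc (0:ℝ) 1)
    (hxr : ∀ t : ℝ, 0 ≤ t → x t ∈ Set.Icc (0:ℝ) 1)
    (hyr : ∀ t : ℝ, 0 ≤ t → y t ∈ Set.Icc 0 lamStar)
    (heq : ∀ t : ℝ, 0 ≤ t →
      y t = c * lamBar0F t + ∫ s in (0:ℝ)..t, lamBarF (t - s) * (x s * y s))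
    (hdiv : (∫⁻ t in Set.Ioi (0:ℝ), ENNReal.ofReal (y t)) = ⊤) :
    Tendsto (fun t : ℝ => (∫ s in (0:ℝ)..t, x s * y s) / ∫ s in (0:ℝ)..t, y s)
      atTop (nhds (1 / R0)) := by
  have hxy_le (t : ℝ) (ht : 0 ≤ t) : x t * y t ≤ y t :=
    mul_le_of_le_one_left (hyr t ht).1 (hxr t ht).2
  have hxy_range (t : ℝ) (ht : 0 ≤ t) : x t * y t ∈ Icc 0 lamStar :=
    ⟨mul_nonneg (hxr t ht).1 (hyr t ht).1, (hxy_le t ht).trans (hyr t ht).2⟩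
  have hxy_int := integrableOn_Ioc_of_mem_Icc (f := fun s => x s * y s) (hx.mul hy) hxy_range
  have hy_int := integrableOn_Ioc_of_mem_Icc hy hyr
  have hY := tendsto_setIntegral_Ioc_atTop_of_lintegral_eq_top hy hy_int
    (fun t ht => (hyr t ht.le).1) hdiv
  have hL : Tendsto (fun M => R0 - ∫ t in (0:ℝ)..M, lamBarF t) atTop (𝓝 0) := by
    have := (tendsto_const_nhds (x := R0)).sub
      (intervalIntegral_tendsto_integral_Ioi 0 hlb_int tendsto_id)
    rwa [← hR0def, sub_self] at this
  have hratio : Tendsto (fun T => R0 * (∫ s in Ioc 0 T, x s * y s) / ∫ t in Ioc 0 T, y t)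
      atTop (𝓝 1) := by
    refine tendsto_div_of_abs_sub_le hY fun δ hδ => ?_
    obtain ⟨M, hMδ, hM⟩ := ((hL.eventually (ge_mem_nhds hδ)).and (eventually_ge_atTop 0)).exists
    refine ⟨lamStar * R0 * M + ∫ t in Ioi 0, c * lamBar0F t, .of_forall fun T => ?_⟩
    have hbound := abs_sub_setIntegral_le_of_renewal (g := fun s => x s * y s) hlb_meas
      (hx.mul hy) hlb_range hlb_int hxy_range (fun t ht => mul_nonneg hc.1 (hlb0_nn t ht))
      (hlb0_int.const_mul c) (hy_int T) heq hM
    have hZY : ∫ s in Ioc 0 T, x s * y s ≤ ∫ t in Ioc 0 T, y t :=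
      setIntegral_mono_on (hxy_int T) (hy_int T) measurableSet_Ioc fun t ht => hxy_le t ht.1.le
    have hZ : 0 ≤ ∫ s in Ioc 0 T, x s * y s :=
      setIntegral_nonneg measurableSet_Ioc fun t ht => (hxy_range t ht.1.le).1
    rw [← hR0def] at hbound
    nlinarith [mul_le_mul hMδ hZY hZ hδ.le]
  refine (mul_one (1 / R0) ▸ hratio.const_mul (1 / R0)).congr' ?_
  filter_upwards [eventually_ge_atTop 0] with T hT
  rw [intervalIntegral.integral_of_le hT, intervalIntegral.integral_of_le hT, mul_div_assoc,
    ← mul_assoc, one_div_mul_cancel hR0pos.ne', one_mul]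

/-- For bounded solutions of the renewal equation
`y = c λ̄₀ + λ̄ ⋆ (x y)` with `∫₀^∞ y = ∞`, one has
`(∫₀ᵗ x y)/(∫₀ᵗ y) → 1/R₀` as `t → ∞`. -/
theorem ratio_tendsto_inv_R0
    (lamStar : ℝ) (hls : 0 < lamStar)
    (lamBarF lamBar0F x y : ℝ → ℝ)
    (hlb_meas : Measurable lamBarF) (hlb0_meas : Measurable lamBar0F)
    (hx : Measurable x) (hy : Measurable y)
    (hlb_range : ∀ t : ℝ, 0 ≤ t → lamBarF t ∈ Set.Icc 0 lamStar)
    (hlb_int : IntegrableOn lamBarF (Set.Ioi 0))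
    (hlb0_nn : ∀ t : ℝ, 0 ≤ t → 0 ≤ lamBar0F t)
    (hlb0_int : IntegrableOn lamBar0F (Set.Ioi 0))
    (R0 : ℝ) (hR0def : R0 = ∫ t in Set.Ioi (0:ℝ), lamBarF t) (hR0pos : 0 < R0)
    (c : ℝ) (hc : c ∈ Set.Icc (0:ℝ) 1)
    (hxr : ∀ t : ℝ, 0 ≤ t → x t ∈ Set.Icc (0:ℝ) 1)
    (hyr : ∀ t : ℝ, 0 ≤ t → y t ∈ Set.Icc 0 lamStar)
    (heq : ∀ t : ℝ, 0 ≤ t →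
      y t = c * lamBar0F t + ∫ s in (0:ℝ)..t, lamBarF (t - s) * (x s * y s))
    (hdiv : (∫⁻ t in Set.Ioi (0:ℝ), ENNReal.ofReal (y t)) = ⊤) :
    Tendsto (fun t : ℝ => (∫ s in (0:ℝ)..t, x s * y s) / ∫ s in (0:ℝ)..t, y s)
      atTop (nhds (1 / R0)) :=
  ratio_tendsto_inv_R0_general lamStar lamBarF lamBar0F x y hlb_meas hx hy hlb_range hlb_int hlb0_nn
    hlb0_int R0 hR0def hR0pos c hc hxr hyr heq hdiv

end
end

section
/- Let η and θ be nonnegative integrable random variables with 𝔼[η] + 𝔼[θ] > 0, set γ(t) := 1{t ≥ η + θ} (so that γ* = 1 a.s.), and let R₀ ∈ (1, ∞). Then the equation ∫₀^∞ 𝔼[exp(−∫₀ˢ γ(r/x) dr)] ds = R₀ has a unique positive solution, given by x* = (R₀ − 1)/(𝔼[η] + 𝔼[θ]); and the corresponding endemic value Ī* := 𝔼[η]·x*/R₀ equals (𝔼[η]/(𝔼[η] + 𝔼[θ]))·(1 − 1/R₀). -/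
open MeasureTheory Filter Set ProbabilityTheory
open scoped ENNReal

noncomputable section

variable {Ω : Type*} [MeasurableSpace Ω]

/-! With `γ(t) = 1{t ≥ T}`, `T = η + θ`, one has `∫₀ˢ γ(r/x) dr = (s - xT)⁺` and
`∫₀^∞ e^{-(s - c)⁺} ds = c + 1`, so by Fubini `H(x) = x 𝔼[T] + 1`. Being affine and strictly
increasing, `H` takes the value `R₀` exactly at `x* = (R₀ - 1)/𝔼[T]`. -/

open Real

theorem intervalIntegral_ite_le_one_eq_max {b s : ℝ} (hb : 0 ≤ b) (hs : 0 ≤ s) :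
    ∫ r in (0:ℝ)..s, (if b ≤ r then (1:ℝ) else 0) = max (s - b) 0 := by
  have hind : (fun r => if b ≤ r then (1:ℝ) else 0) = (Ici b).indicator 1 := by
    ext r; simp [indicator_apply]
  have hIoi : Ioi b ∩ Ioc 0 s = Ioc b s := by
    rw [inter_comm, Ioc_inter_Ioi, max_eq_right hb]
  rw [intervalIntegral.integral_of_le hs, hind, integral_indicator_one measurableSet_Ici,
    measureReal_restrict_apply measurableSet_Ici,
    measureReal_congr ((Ioi_ae_eq_Ici (μ := volume)).symm.inter (ae_eq_refl (Ioc 0 s))), hIoi,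
    volume_real_Ioc]

theorem integrableOn_exp_neg_max_sub (c : ℝ) :
    IntegrableOn (fun s => exp (-max (s - c) 0)) (Ioi 0) := by
  refine Integrable.mono' ((integrableOn_exp_neg_Ioi 0).const_mul (exp c)) (by fun_prop) ?_
  refine (ae_restrict_mem measurableSet_Ioi).mono fun s _ => ?_
  rw [norm_of_nonneg (exp_pos _).le, ← exp_add]
  exact exp_le_exp.2 (by linarith [le_max_left (s - c) 0])

theorem integral_exp_neg_max_sub {c : ℝ} (hc : 0 ≤ c) :
    ∫ s in Ioi 0, exp (-max (s - c) 0) = c + 1 := by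
  have hint := integrableOn_exp_neg_max_sub c
  rw [← Ioc_union_Ioi_eq_Ioi hc] at hint ⊢
  rw [setIntegral_union (Ioc_disjoint_Ioi le_rfl) measurableSet_Ioi
    (hint.mono_set subset_union_left) (hint.mono_set subset_union_right)]
  have hflat : ∫ s in Ioc 0 c, exp (-max (s - c) 0) = c := by
    rw [setIntegral_congr_fun measurableSet_Ioc fun s hs => by
      rw [max_eq_right (by linarith [hs.2]), neg_zero, exp_zero]]
    simp [hc]
  have htail : ∫ s in Ioi c, exp (-max (s - c) 0) = 1 := by
    rw [setIntegral_congr_fun measurableSet_Ioi fun s (hs : c < s) => by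
      rw [max_eq_left (by linarith), neg_sub, sub_eq_add_neg, exp_add]]
    rw [integral_const_mul, integral_exp_neg_Ioi, ← exp_add, add_neg_cancel, exp_zero]
  rw [hflat, htail]

theorem Hfun_ite_le {P : Measure Ω} [IsProbabilityMeasure P]
    {T : Ω → ℝ} (hT : Measurable T) (hT_nonneg : ∀ᵐ ω ∂P, 0 ≤ T ω) (hT_int : Integrable T P)
    {x : ℝ} (hx : 0 < x) :
    Hfun P (fun ω t => if T ω ≤ t then 1 else 0) x = x * ∫ ω, T ω ∂P + 1 := by
  have hc_nonneg : ∀ᵐ ω ∂P, 0 ≤ x * T ω := by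
    filter_upwards [hT_nonneg] with ω hω using mul_nonneg hx.le hω
  have hinner : ∀ s ∈ Ioi (0:ℝ),
      ∫ ω, exp (-∫ r in (0:ℝ)..s, if T ω ≤ r / x then (1:ℝ) else 0) ∂P
        = ∫ ω, exp (-max (s - x * T ω) 0) ∂P := by
    intro s hs
    refine integral_congr_ae ?_
    filter_upwards [hc_nonneg] with ω hω
    simp_rw [le_div_iff₀' hx, intervalIntegral_ite_le_one_eq_max hω (le_of_lt hs)]
  have hprod : Integrable (Function.uncurry fun ω s => exp (-max (s - x * T ω) 0))
      (P.prod (volume.restrict (Ioi 0))) := by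
    refine (integrable_prod_iff (by fun_prop)).2
      ⟨ae_of_all _ fun ω => integrableOn_exp_neg_max_sub (x * T ω), ?_⟩
    refine ((hT_int.const_mul x).add (integrable_const 1)).congr ?_
    filter_upwards [hc_nonneg] with ω hω
    simp only [Function.uncurry_apply_pair, norm_of_nonneg (exp_pos _).le]
    exact (integral_exp_neg_max_sub hω).symm
  calc Hfun P (fun ω t => if T ω ≤ t then 1 else 0) x
      = ∫ s in Ioi (0:ℝ), ∫ ω, exp (-max (s - x * T ω) 0) ∂P :=
        setIntegral_congr_fun measurableSet_Ioi hinner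
    _ = ∫ ω, (∫ s in Ioi (0:ℝ), exp (-max (s - x * T ω) 0)) ∂P :=
        (integral_integral_swap hprod).symm
    _ = ∫ ω, (x * T ω + 1) ∂P := integral_congr_ae <| by
        filter_upwards [hc_nonneg] with ω hω using integral_exp_neg_max_sub hω
    _ = x * ∫ ω, T ω ∂P + 1 := by
        rw [integral_add (hT_int.const_mul x) (integrable_const 1), integral_const_mul]
        simp

/-- SIRS specialization: with `γ(t) = 1_{t ≥ η + θ}` and `R₀ ∈ (1, ∞)`,
the equation `∫₀^∞ 𝔼[exp(−∫₀ˢ γ(r/x) dr)] ds = R₀` has the unique positive solution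
`x* = (R₀ − 1)/(𝔼[η] + 𝔼[θ])`, and `Ī* = 𝔼[η] x* / R₀ = (𝔼[η]/(𝔼[η]+𝔼[θ]))(1 − 1/R₀)`. -/
theorem SIRS_endemic_equilibrium
    {Ω : Type*} [MeasurableSpace Ω] (P : Measure Ω) [IsProbabilityMeasure P]
    (etaV theta : Ω → ℝ) (heta : Measurable etaV) (htheta : Measurable theta)
    (hnn : ∀ᵐ ω ∂P, 0 ≤ etaV ω ∧ 0 ≤ theta ω)
    (heta_int : Integrable etaV P) (htheta_int : Integrable theta P)
    (hpos : 0 < (∫ ω, etaV ω ∂P) + ∫ ω, theta ω ∂P)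
    (R0 : ℝ) (hR0 : 1 < R0)
    (xstar : ℝ)
    (hxstar : xstar = (R0 - 1) / ((∫ ω, etaV ω ∂P) + ∫ ω, theta ω ∂P)) :
    0 < xstar ∧
    (∫ s in Set.Ioi (0:ℝ), ∫ ω,
        Real.exp (- ∫ r in (0:ℝ)..s,
          (if etaV ω + theta ω ≤ r / xstar then (1:ℝ) else 0)) ∂P) = R0 ∧
    (∀ y : ℝ, 0 < y →
      (∫ s in Set.Ioi (0:ℝ), ∫ ω,
        Real.exp (- ∫ r in (0:ℝ)..s,
          (if etaV ω + theta ω ≤ r / y then (1:ℝ) else 0)) ∂P) = R0 →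
      y = xstar) ∧
    (∫ ω, etaV ω ∂P) * xstar / R0
      = ((∫ ω, etaV ω ∂P) / ((∫ ω, etaV ω ∂P) + ∫ ω, theta ω ∂P)) * (1 - 1 / R0) := by
  set E := (∫ ω, etaV ω ∂P) + ∫ ω, theta ω ∂P
  have hH : ∀ y, 0 < y →
      Hfun P (fun ω t => if etaV ω + theta ω ≤ t then 1 else 0) y = y * E + 1 := by
    intro y hy
    rw [Hfun_ite_le (T := fun ω => etaV ω + theta ω) (heta.add htheta)
      (hnn.mono fun ω hω => add_nonneg hω.1 hω.2) (heta_int.add htheta_int) hy,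
      integral_add heta_int htheta_int]
  have hxstar_pos : 0 < xstar := hxstar ▸ div_pos (by linarith) hpos
  refine ⟨hxstar_pos, (hH xstar hxstar_pos).trans ?_, fun y hy hHy => ?_, ?_⟩
  · rw [hxstar, div_mul_cancel₀ _ hpos.ne']
    ring
  · have hyE : y * E + 1 = R0 := (hH y hy).symm.trans hHy
    rw [hxstar, eq_div_iff hpos.ne']
    linarith
  · rw [hxstar]
    field_simp

end
end
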